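/- Let a_m, ω_m > 0 and let (r₀, V₀, θ₀) satisfy r₀ ≥ 0, V₀ ≥ 0, V₀² ≤ 2a_m r₀. Define the trajectory under the auxiliary controller: on [0, t₁] accelerate a = a_m with ṙ = −V, V̇ = a, θ constant = θ₀; on [t₁, t₂] decelerate a = −a_m; on [t₂, t₃] rotate with θ̇ = −sign(θ₀)ω_m, where t₁ = −V₀/a_m + √(V₀²+2a_m r₀)/(a_m√2), t₂ = 2t₁ + V₀/a_m, t₃ = t₂ + |θ₀|/ω_m. Then the total cost F(r₀,θ₀,V₀) = ∫₀^{t₃} (r(τ)² + V(τ)² + θ(τ)²)dτ equals θ₀²·(√2·√(V₀²+2a_m r₀) − V₀)/a_m + |θ₀|³/(3ω_m) + √2·(V₀²+2a_m r₀)^{3/2}·(23V₀² + 40a_m² + 46a_m r₀)/(240 a_m³) − (V₀³/(3a_m) + V₀ r₀²/a_m + 2V₀³ r₀/(3a_m²) + 2V₀⁵/(15a_m³)). -/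

import Mathlib

/-!
On each acceleration phase `ṙ = -V`, `V̇ = ±a_m` with constant `θ`, uniqueness for these
derivative equations (mean value theorem) makes `r`, `V` polynomials in time, so the stage cost
is a quartic with the explicit antiderivative `constAccelCost`. On the rotation phase only
`θ(t)² = (ω (t₃ - t))²` contributes, which integrates to `|θ₀|³ / (3ω)`. Writing
`k = √2 √(V₀² + 2 a_m r₀)`, one has `t₁ = (k - 2V₀) / (2a_m)`, `t₂ - t₁ = k / (2a_m)` and
`r₀ = (k² - 2V₀²) / (4a_m)`, after which the closed form is a rational identity in `k`.
-/

open Set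

theorem eqOn_Icc_of_hasDerivWithinAt {a b : ℝ} {f g f' : ℝ → ℝ}
    (hf : ∀ t ∈ Icc a b, HasDerivWithinAt f (f' t) (Icc a b) t)
    (hg : ∀ t ∈ Icc a b, HasDerivWithinAt g (f' t) (Icc a b) t) (ha : f a = g a) :
    EqOn f g (Icc a b) :=
  eq_of_has_deriv_right_eq
    (fun t ht => (hf t (Ico_subset_Icc_self ht)).mono_of_mem_nhdsWithin (Icc_mem_nhdsGE_of_mem ht))
    (fun t ht => (hg t (Ico_subset_Icc_self ht)).mono_of_mem_nhdsWithin (Icc_mem_nhdsGE_of_mem ht))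
    (fun t ht => (hf t ht).continuousWithinAt) (fun t ht => (hg t ht).continuousWithinAt) ha

/-- The stage cost `r² + V² + θ²` at time `x` along `ṙ = -V`, `V̇ = c` from `(r, V) = (ρ, v)`,
with `θ` frozen. -/
noncomputable def constAccelStageCost (ρ v c θ x : ℝ) : ℝ :=
  (ρ - v * x - c * x ^ 2 / 2) ^ 2 + (v + c * x) ^ 2 + θ ^ 2

noncomputable def constAccelCost (ρ v c θ T : ℝ) : ℝ :=
  (ρ ^ 2 + v ^ 2 + θ ^ 2) * T + (v * c - ρ * v) * T ^ 2 + (v ^ 2 - ρ * c + c ^ 2) * T ^ 3 / 3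
    + v * c * T ^ 4 / 4 + c ^ 2 * T ^ 5 / 20

theorem hasDerivAt_constAccelCost (ρ v c θ x : ℝ) :
    HasDerivAt (constAccelCost ρ v c θ) (constAccelStageCost ρ v c θ x) x := by
  have hp (n : ℕ) (k : ℝ) : HasDerivAt (fun x => k * x ^ n) (k * (n * x ^ (n - 1))) x :=
    (hasDerivAt_pow n x).const_mul k
  have h := (((((hp 1 (ρ ^ 2 + v ^ 2 + θ ^ 2)).add (hp 2 (v * c - ρ * v))).add
    ((hp 3 (v ^ 2 - ρ * c + c ^ 2)).div_const 3)).add ((hp 4 (v * c)).div_const 4)).add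
    ((hp 5 (c ^ 2 / 4)).div_const 5))
  refine (h.congr_deriv ?_).congr_of_eventuallyEq (.of_forall fun T => ?_)
  · simp only [constAccelStageCost]; push_cast; ring
  · simp only [constAccelCost, Pi.add_apply]; ring

theorem integral_constAccelStageCost (ρ v c θ T : ℝ) :
    ∫ x in (0:ℝ)..T, constAccelStageCost ρ v c θ x = constAccelCost ρ v c θ T := by
  rw [intervalIntegral.integral_eq_sub_of_hasDerivAt
    (fun x _ => hasDerivAt_constAccelCost ρ v c θ x)
    (by unfold constAccelStageCost; exact (by fun_prop : Continuous _).intervalIntegrable _ _)]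
  simp [constAccelCost]

section ConstAccel

variable {a b c θc : ℝ} {r V θ : ℝ → ℝ}

theorem eqOn_velocity_of_const_accel (hV : ∀ t ∈ Icc a b, HasDerivWithinAt V c (Icc a b) t) :
    EqOn V (fun t => V a + c * (t - a)) (Icc a b) :=
  eqOn_Icc_of_hasDerivWithinAt (f' := fun _ => c) hV
    (fun t _ => (((hasDerivAt_id t).sub_const a).const_mul c).const_add (V a)
      |>.hasDerivWithinAt.congr_deriv (mul_one c)) (by simp)

theorem eqOn_position_of_const_accel (hr : ∀ t ∈ Icc a b, HasDerivWithinAt r (-V t) (Icc a b) t)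
    (hV : ∀ t ∈ Icc a b, HasDerivWithinAt V c (Icc a b) t) :
    EqOn r (fun t => r a - V a * (t - a) - c * (t - a) ^ 2 / 2) (Icc a b) := by
  refine eqOn_Icc_of_hasDerivWithinAt hr (fun t ht => ?_) (by simp)
  have hs : HasDerivAt (fun t => t - a) 1 t := (hasDerivAt_id t).sub_const a
  refine ((((hs.const_mul (V a)).const_sub (r a)).sub ((hs.pow 2).const_mul c |>.div_const 2))
    |>.hasDerivWithinAt).congr_deriv ?_
  rw [eqOn_velocity_of_const_accel hV ht]
  push_cast; ring

theorem eqOn_cost_of_const_accel (hr : ∀ t ∈ Icc a b, HasDerivWithinAt r (-V t) (Icc a b) t)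
    (hV : ∀ t ∈ Icc a b, HasDerivWithinAt V c (Icc a b) t) (hθ : ∀ t ∈ Icc a b, θ t = θc) :
    EqOn (fun t => r t ^ 2 + V t ^ 2 + θ t ^ 2)
      (fun t => constAccelStageCost (r a) (V a) c θc (t - a)) (Icc a b) := by
  intro t ht
  simp only [constAccelStageCost, eqOn_position_of_const_accel hr hV ht,
    eqOn_velocity_of_const_accel hV ht, hθ t ht]

theorem intervalIntegrable_cost_of_const_accel (hab : a ≤ b)
    (hr : ∀ t ∈ Icc a b, HasDerivWithinAt r (-V t) (Icc a b) t)
    (hV : ∀ t ∈ Icc a b, HasDerivWithinAt V c (Icc a b) t) (hθ : ∀ t ∈ Icc a b, θ t = θc) :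
    IntervalIntegrable (fun t => r t ^ 2 + V t ^ 2 + θ t ^ 2) MeasureTheory.volume a b :=
  ContinuousOn.intervalIntegrable_of_Icc hab <|
    ((by unfold constAccelStageCost; fun_prop : Continuous _).continuousOn).congr
      (eqOn_cost_of_const_accel hr hV hθ)

theorem integral_cost_of_const_accel (hab : a ≤ b)
    (hr : ∀ t ∈ Icc a b, HasDerivWithinAt r (-V t) (Icc a b) t)
    (hV : ∀ t ∈ Icc a b, HasDerivWithinAt V c (Icc a b) t) (hθ : ∀ t ∈ Icc a b, θ t = θc) :
    ∫ t in a..b, (r t ^ 2 + V t ^ 2 + θ t ^ 2) = constAccelCost (r a) (V a) c θc (b - a) := by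
  rw [intervalIntegral.integral_congr ((uIcc_of_le hab).symm ▸ eqOn_cost_of_const_accel hr hV hθ),
    intervalIntegral.integral_comp_sub_right, sub_self, integral_constAccelStageCost]

end ConstAccel

theorem Real.sign_mul_abs (x : ℝ) : Real.sign x * |x| = x := by
  obtain hx | rfl | hx := lt_trichotomy x 0
  · rw [Real.sign_of_neg hx, abs_of_neg hx]; ring
  · simp
  · rw [Real.sign_of_pos hx, abs_of_pos hx, one_mul]

section Rotation

variable {a b θ₀ ω : ℝ} {r V θ : ℝ → ℝ}

theorem eqOn_heading_of_rotation (hω : ω ≠ 0) (hb : b = a + |θ₀| / ω) (hθa : θ a = θ₀)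
    (hθ : ∀ t ∈ Icc a b, HasDerivWithinAt θ (-Real.sign θ₀ * ω) (Icc a b) t) :
    EqOn θ (fun t => Real.sign θ₀ * ω * (b - t)) (Icc a b) := by
  refine eqOn_Icc_of_hasDerivWithinAt hθ (fun t _ => ?_) ?_
  · exact (((hasDerivAt_id t).const_sub b).const_mul _).hasDerivWithinAt.congr_deriv (by simp)
  · rw [hθa, hb, add_sub_cancel_left, mul_assoc, mul_div_cancel₀ _ hω, Real.sign_mul_abs]

theorem eqOn_cost_of_rotation (hω : ω ≠ 0) (hb : b = a + |θ₀| / ω)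
    (hr : ∀ t ∈ Icc a b, r t = 0) (hV : ∀ t ∈ Icc a b, V t = 0) (hθa : θ a = θ₀)
    (hθ : ∀ t ∈ Icc a b, HasDerivWithinAt θ (-Real.sign θ₀ * ω) (Icc a b) t) :
    EqOn (fun t => r t ^ 2 + V t ^ 2 + θ t ^ 2)
      (fun t => (Real.sign θ₀ * ω) ^ 2 * (b - t) ^ 2) (Icc a b) := by
  intro t ht
  simp only [hr t ht, hV t ht, eqOn_heading_of_rotation hω hb hθa hθ ht]
  ring

theorem intervalIntegrable_cost_of_rotation (hω : 0 < ω) (hb : b = a + |θ₀| / ω)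
    (hr : ∀ t ∈ Icc a b, r t = 0) (hV : ∀ t ∈ Icc a b, V t = 0) (hθa : θ a = θ₀)
    (hθ : ∀ t ∈ Icc a b, HasDerivWithinAt θ (-Real.sign θ₀ * ω) (Icc a b) t) :
    IntervalIntegrable (fun t => r t ^ 2 + V t ^ 2 + θ t ^ 2) MeasureTheory.volume a b :=
  ContinuousOn.intervalIntegrable_of_Icc (hb ▸ le_add_of_nonneg_right (by positivity)) <|
    (by fun_prop : Continuous _).continuousOn.congr (eqOn_cost_of_rotation hω.ne' hb hr hV hθa hθ)

theorem integral_cost_of_rotation (hω : 0 < ω) (hb : b = a + |θ₀| / ω)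
    (hr : ∀ t ∈ Icc a b, r t = 0) (hV : ∀ t ∈ Icc a b, V t = 0) (hθa : θ a = θ₀)
    (hθ : ∀ t ∈ Icc a b, HasDerivWithinAt θ (-Real.sign θ₀ * ω) (Icc a b) t) :
    ∫ t in a..b, (r t ^ 2 + V t ^ 2 + θ t ^ 2) = |θ₀| ^ 3 / (3 * ω) := by
  have hab : a ≤ b := hb ▸ le_add_of_nonneg_right (by positivity)
  have hsign : Real.sign θ₀ ^ 2 * |θ₀| ^ 3 = |θ₀| ^ 3 :=
    calc Real.sign θ₀ ^ 2 * |θ₀| ^ 3 = (Real.sign θ₀ * |θ₀|) ^ 2 * |θ₀| := by ring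
      _ = |θ₀| ^ 3 := by rw [Real.sign_mul_abs, ← sq_abs]; ring
  rw [intervalIntegral.integral_congr
      ((uIcc_of_le hab).symm ▸ eqOn_cost_of_rotation hω.ne' hb hr hV hθa hθ),
    intervalIntegral.integral_const_mul,
    intervalIntegral.integral_comp_sub_left (fun x => x ^ 2), sub_self, integral_pow, hb,
    add_sub_cancel_left, ← hsign]
  norm_num
  field_simp

end Rotation

theorem constAccelCost_accel_add_decel {a r₀ V₀ θ₀ t₁ t₂ : ℝ} (ha : 0 < a)
    (hX : 0 ≤ V₀ ^ 2 + 2 * a * r₀)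
    (ht₁ : t₁ = -(V₀ / a) + Real.sqrt (V₀ ^ 2 + 2 * a * r₀) / (a * Real.sqrt 2))
    (ht₂ : t₂ = 2 * t₁ + V₀ / a) :
    constAccelCost r₀ V₀ a θ₀ t₁
      + constAccelCost (r₀ - V₀ * t₁ - a * t₁ ^ 2 / 2) (V₀ + a * t₁) (-a) θ₀ (t₂ - t₁)
    = θ₀ ^ 2 * ((Real.sqrt 2 * Real.sqrt (V₀ ^ 2 + 2 * a * r₀) - V₀) / a)
      + Real.sqrt 2 * (V₀ ^ 2 + 2 * a * r₀) ^ ((3:ℝ)/2)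
          * (23 * V₀ ^ 2 + 40 * a ^ 2 + 46 * a * r₀) / (240 * a ^ 3)
      - (V₀ ^ 3 / (3 * a) + V₀ * r₀ ^ 2 / a + 2 * V₀ ^ 3 * r₀ / (3 * a ^ 2)
          + 2 * V₀ ^ 5 / (15 * a ^ 3)) := by
  set X := V₀ ^ 2 + 2 * a * r₀ with hX_def
  have h2 : Real.sqrt 2 ^ 2 = 2 := Real.sq_sqrt zero_le_two
  have hpow : Real.sqrt 2 * X ^ ((3:ℝ)/2) = Real.sqrt 2 * Real.sqrt X * X := by
    rw [Real.sqrt_eq_rpow X, mul_assoc, mul_comm _ X, ← Real.rpow_one_add' hX (by norm_num)]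
    norm_num
  have ht₁' : t₁ = (Real.sqrt 2 * Real.sqrt X - 2 * V₀) / (2 * a) := by
    rw [ht₁]
    field_simp
    linear_combination -Real.sqrt X * h2
  have hk : (Real.sqrt 2 * Real.sqrt X) ^ 2 = 2 * X := by
    rw [mul_pow, h2, Real.sq_sqrt hX]
  rw [hpow, ht₂, ht₁']
  clear_value X
  generalize Real.sqrt 2 * Real.sqrt X = k at hk ⊢
  obtain rfl : X = k ^ 2 / 2 := by linarith
  obtain rfl : r₀ = (k ^ 2 - 2 * V₀ ^ 2) / (4 * a) := by
    field_simp; linarith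
  unfold constAccelCost
  field_simp
  ring

theorem terminal_cost_closed_form
    (a_m ω_m r₀ V₀ θ₀ : ℝ)
    (ha : a_m > 0) (hω : ω_m > 0)
    (hV₀ : V₀ ≥ 0) (hVr : V₀ ^ 2 ≤ 2 * a_m * r₀)
    (t₁ t₂ t₃ : ℝ)
    (ht₁ : t₁ = -(V₀ / a_m) + Real.sqrt (V₀ ^ 2 + 2 * a_m * r₀) / (a_m * Real.sqrt 2))
    (ht₂ : t₂ = 2 * t₁ + V₀ / a_m)
    (ht₃ : t₃ = t₂ + |θ₀| / ω_m)
    (r V θ : ℝ → ℝ)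
    (hr0 : r 0 = r₀) (hV0 : V 0 = V₀)
    -- accelerate on [0, t₁]
    (hrdot1 : ∀ t ∈ Icc (0:ℝ) t₁, HasDerivWithinAt r (-(V t)) (Icc (0:ℝ) t₁) t)
    (hVdot1 : ∀ t ∈ Icc (0:ℝ) t₁, HasDerivWithinAt V a_m (Icc (0:ℝ) t₁) t)
    (hθ1 : ∀ t ∈ Icc (0:ℝ) t₂, θ t = θ₀)
    -- decelerate on [t₁, t₂]
    (hrdot2 : ∀ t ∈ Icc t₁ t₂, HasDerivWithinAt r (-(V t)) (Icc t₁ t₂) t)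
    (hVdot2 : ∀ t ∈ Icc t₁ t₂, HasDerivWithinAt V (-a_m) (Icc t₁ t₂) t)
    -- rotate at the origin on [t₂, t₃]
    (hr3 : ∀ t ∈ Icc t₂ t₃, r t = 0)
    (hV3 : ∀ t ∈ Icc t₂ t₃, V t = 0)
    (hθdot3 : ∀ t ∈ Icc t₂ t₃,
      HasDerivWithinAt θ (-(Real.sign θ₀) * ω_m) (Icc t₂ t₃) t) :
    (∫ τ in (0:ℝ)..t₃, (r τ ^ 2 + V τ ^ 2 + θ τ ^ 2))
    = θ₀ ^ 2 * ((Real.sqrt 2 * Real.sqrt (V₀ ^ 2 + 2 * a_m * r₀) - V₀) / a_m)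
      + |θ₀| ^ 3 / (3 * ω_m)
      + Real.sqrt 2 * (V₀ ^ 2 + 2 * a_m * r₀) ^ ((3:ℝ)/2)
          * (23 * V₀ ^ 2 + 40 * a_m ^ 2 + 46 * a_m * r₀) / (240 * a_m ^ 3)
      - (V₀ ^ 3 / (3 * a_m) + V₀ * r₀ ^ 2 / a_m
          + 2 * V₀ ^ 3 * r₀ / (3 * a_m ^ 2)
          + 2 * V₀ ^ 5 / (15 * a_m ^ 3)) := by
  have h01 : 0 ≤ t₁ := by
    have hs : Real.sqrt 2 * V₀ ≤ Real.sqrt (V₀ ^ 2 + 2 * a_m * r₀) :=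
      calc Real.sqrt 2 * V₀ = Real.sqrt (2 * V₀ ^ 2) := by
            rw [Real.sqrt_mul zero_le_two, Real.sqrt_sq hV₀]
        _ ≤ Real.sqrt (V₀ ^ 2 + 2 * a_m * r₀) := Real.sqrt_le_sqrt (by linarith)
    rw [ht₁, ← sub_eq_neg_add, sub_nonneg, div_le_div_iff₀ ha (by positivity)]
    nlinarith
  have h12 : t₁ ≤ t₂ := by rw [ht₂]; linarith [div_nonneg hV₀ ha.le]
  have hθ₁ : ∀ t ∈ Icc 0 t₁, θ t = θ₀ := fun t ht => hθ1 t ⟨ht.1, ht.2.trans h12⟩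
  have hθ₂ : ∀ t ∈ Icc t₁ t₂, θ t = θ₀ := fun t ht => hθ1 t ⟨h01.trans ht.1, ht.2⟩
  have hθt₂ : θ t₂ = θ₀ := hθ1 t₂ ⟨h01.trans h12, le_rfl⟩
  have hi₁ := intervalIntegrable_cost_of_const_accel h01 hrdot1 hVdot1 hθ₁
  have hi₂ := intervalIntegrable_cost_of_const_accel h12 hrdot2 hVdot2 hθ₂
  have hi₃ := intervalIntegrable_cost_of_rotation hω ht₃ hr3 hV3 hθt₂ hθdot3
  rw [← intervalIntegral.integral_add_adjacent_intervals (hi₁.trans hi₂) hi₃,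
    ← intervalIntegral.integral_add_adjacent_intervals hi₁ hi₂,
    integral_cost_of_const_accel h01 hrdot1 hVdot1 hθ₁,
    integral_cost_of_const_accel h12 hrdot2 hVdot2 hθ₂,
    integral_cost_of_rotation hω ht₃ hr3 hV3 hθt₂ hθdot3,
    eqOn_position_of_const_accel hrdot1 hVdot1 (right_mem_Icc.2 h01),
    eqOn_velocity_of_const_accel hVdot1 (right_mem_Icc.2 h01), hr0, hV0]
  beta_reduce
  rw [sub_zero, constAccelCost_accel_add_decel ha (by linarith [sq_nonneg V₀]) ht₁ ht₂]
  ring
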